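/- arXiv:1303.6799 — 2 statements merged into one kernel-verified Lean document; each statement's English description precedes it below -/
import Mathlib

section
/- Pressing two non-adjacent black vertices u and v (both black in G) in either order yields the same resulting graph: (G·u)·v = (G·v)·u, and v remains black in G·u (and u black in G·v). -/
structure BW (V : Type) where
  adj : V → V → Bool
  black : V → Bool
  symm : ∀ u w, adj u w = adj w u
  irrefl : ∀ v, adj v v = false

variable {V : Type} [DecidableEq V]

/-- Pressing a vertex `v`: neighbors toggle color, pairs of neighbors toggle
adjacency, and `v` becomes white and isolated. -/
def press (G : BW V) (v : V) : BW V where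
  adj u w :=
    if u = v ∨ w = v ∨ u = w then false
    else xor (G.adj u w) (G.adj u v && G.adj w v)
  black u := if u = v then false else xor (G.black u) (G.adj u v)
  symm := by
    intro u w
    by_cases h1 : u = v <;> by_cases h2 : w = v <;> by_cases h3 : u = w <;>
      simp_all [G.symm u w, Bool.xor_comm, Bool.and_comm] <;> tauto
  irrefl := by intro u; simp

/-- The graph obtained after pressing the vertices of a list in order. -/
def pressPath (G : BW V) : List V → BW V
  | [] => G
  | v :: P => pressPath (press G v) P

/-- A pressing path is valid if every vertex is black when it is pressed. -/
def ValidPath (G : BW V) : List V → Prop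
  | [] => True
  | v :: P => G.black v = true ∧ ValidPath (press G v) P

/-- The all-white, edgeless graph. -/
def AllWhiteEmpty (G : BW V) : Prop :=
  (∀ v, G.black v = false) ∧ ∀ u w, G.adj u w = false

/-- A successful pressing path: valid and leading to the all-white empty graph. -/
def Successful (G : BW V) (P : List V) : Prop :=
  ValidPath G P ∧ AllWhiteEmpty (pressPath G P)

/-- The underlying simple graph of a black-and-white graph. -/
def BW.toSimple (G : BW V) : SimpleGraph V where
  Adj u w := G.adj u w = true
  symm := ⟨fun u w h => (G.symm w u).trans h⟩
  loopless := ⟨fun v h => by simp [G.irrefl] at h⟩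

/-- `l` enumerates the vertices as a path: `G` is linear with vertex order `l`. -/
def IsPathList (G : BW V) (l : List V) : Prop :=
  l.Nodup ∧ (∀ v, v ∈ l) ∧
    ∀ u w, G.adj u w = true ↔ ∃ i,
      (l[i]? = some u ∧ l[i+1]? = some w) ∨ (l[i]? = some w ∧ l[i+1]? = some u)

/-- A linear (path) black-and-white graph. -/
def IsLinear (G : BW V) : Prop := ∃ l, IsPathList G l

/-- Adjacency step in the metagraph of successful pressing paths:
their longest common subsequence misses at most 2 presses. -/
def Step (G : BW V) (P Q : List V) : Prop :=
  Successful G P ∧ Successful G Q ∧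
    ∃ R : List V, R.Sublist P ∧ R.Sublist Q ∧ P.length ≤ R.length + 2

/-- Transposition of two consecutive presses which are non-adjacent at that moment. -/
def SwapStep (G : BW V) (P Q : List V) : Prop :=
  ∃ A u w B, P = A ++ u :: w :: B ∧ Q = A ++ w :: u :: B ∧
    (pressPath G A).adj u w = false

/-- The induced black-and-white graph on a subset of the vertices. -/
def BW.restrict (G : BW V) (p : V → Prop) [DecidablePred p] : BW {u // p u} where
  adj u w := G.adj u.1 w.1
  black u := G.black u.1
  symm := fun u w => G.symm u.1 w.1
  irrefl := fun u => G.irrefl u.1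

/-- The all-black path graph on `n` vertices. -/
def pathAllBlack (n : ℕ) : BW (Fin n) where
  adj i j := decide (i.1 + 1 = j.1 ∨ j.1 + 1 = i.1)
  black _ := true
  symm := by intro u w; simp [or_comm]
  irrefl := by intro v; simp

/-! Away from `u` and `v`, pressing `u` and then `v` toggles the colour of `a` by
`[a ~ u] + [a ~ v]` and the edge `ab` by `[a ~ u][b ~ u] + [a ~ v][b ~ v]` (over `𝔽₂`), because
pressing `u` changes neither the colour nor the neighbourhood of a vertex `v` not adjacent to `u`.
Both expressions are symmetric in `u` and `v`. -/

attribute [ext] BW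

section Press

variable (G : BW V) {u v a b : V}

@[simp]
theorem press_adj_left (v b : V) : (press G v).adj v b = false := by simp [press]

@[simp]
theorem press_adj_right (a v : V) : (press G v).adj a v = false := by simp [press]

@[simp]
theorem press_press_adj_left (v w b : V) : (press (press G v) w).adj v b = false := by
  simp [press]

@[simp]
theorem press_press_adj_right (a v w : V) : (press (press G v) w).adj a v = false := by
  simp [press]

theorem press_adj_of_ne (ha : a ≠ v) (hb : b ≠ v) (hab : a ≠ b) :
    (press G v).adj a b = xor (G.adj a b) (G.adj a v && G.adj b v) := by
  simp [press, ha, hb, hab]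

@[simp]
theorem press_black_self (v : V) : (press G v).black v = false := by simp [press]

theorem press_black_of_ne (ha : a ≠ v) :
    (press G v).black a = xor (G.black a) (G.adj a v) := by
  simp [press, ha]

theorem press_adj_of_not_adj (hau : a ≠ u) (hvu : v ≠ u) (hna : G.adj v u = false) :
    (press G u).adj a v = G.adj a v := by
  rcases eq_or_ne a v with rfl | hav
  · simp [BW.irrefl]
  simp [press_adj_of_ne, *]

theorem press_black_of_not_adj (hvu : v ≠ u) (hna : G.adj v u = false) :
    (press G u).black v = G.black v := by
  simp [press_black_of_ne, *]

theorem press_press_adj (hvu : v ≠ u) (hna : G.adj v u = false) (hau : a ≠ u) (hav : a ≠ v)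
    (hbu : b ≠ u) (hbv : b ≠ v) (hab : a ≠ b) :
    (press (press G u) v).adj a b =
      xor (xor (G.adj a b) (G.adj a u && G.adj b u)) (G.adj a v && G.adj b v) := by
  rw [press_adj_of_ne _ hav hbv hab, press_adj_of_ne _ hau hbu hab,
    press_adj_of_not_adj _ hau hvu hna, press_adj_of_not_adj _ hbu hvu hna]

theorem press_press_black (hvu : v ≠ u) (hna : G.adj v u = false) (hau : a ≠ u) (hav : a ≠ v) :
    (press (press G u) v).black a = xor (xor (G.black a) (G.adj a u)) (G.adj a v) := by
  rw [press_black_of_ne _ hav, press_black_of_ne _ hau, press_adj_of_not_adj _ hau hvu hna]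

theorem press_comm (hna : G.adj u v = false) :
    press (press G u) v = press (press G v) u := by
  rcases eq_or_ne u v with rfl | huv
  · rfl
  have hna' : G.adj v u = false := G.symm v u ▸ hna
  ext a b
  · by_cases hspecial : a = u ∨ a = v ∨ b = u ∨ b = v ∨ a = b
    · rcases hspecial with rfl | rfl | rfl | rfl | rfl <;> simp [BW.irrefl]
    push Not at hspecial
    obtain ⟨hau, hav, hbu, hbv, hab⟩ := hspecial
    rw [press_press_adj G huv.symm hna' hau hav hbu hbv hab,
      press_press_adj G huv hna hav hau hbv hbu hab, Bool.xor_right_comm]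
  · rcases eq_or_ne a u with rfl | hau
    · simp [press_black_of_ne, huv]
    rcases eq_or_ne a v with rfl | hav
    · simp [press_black_of_ne, huv.symm]
    rw [press_press_black G huv.symm hna' hau hav, press_press_black G huv hna hav hau,
      Bool.xor_right_comm]

end Press

/-- Pressing two non-adjacent black vertices commutes, and each remains black
after pressing the other. -/
theorem stmt5 {V : Type} [DecidableEq V] (G : BW V) (u v : V) (hne : u ≠ v)
    (hu : G.black u = true) (hv : G.black v = true) (hna : G.adj u v = false) :
    press (press G u) v = press (press G v) u ∧
    (press G u).black v = true ∧ (press G v).black u = true :=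
  ⟨press_comm G hna, (press_black_of_not_adj G hne.symm ((G.symm v u).trans hna)).trans hv,
    (press_black_of_not_adj G hne hna).trans hu⟩
end

section
/- In a linear black-and-white graph G, if v is black in G and X is a successful pressing path of G that does not contain v, then there exists a successful pressing path X' of G containing v whose longest common subsequence with X has length |X| − 1 (i.e., X' is obtained from X by replacing one pressed vertex by v). -/
variable {V : Type} [DecidableEq V]

theorem press_adj (G : BW V) (p u w : V) : (press G p).adj u w =
    if u = p ∨ w = p ∨ u = w then false
    else xor (G.adj u w) (G.adj u p && G.adj w p) := rfl

theorem press_black (G : BW V) (p u : V) : (press G p).black u =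
    if u = p then false else xor (G.black u) (G.adj u p) := rfl

theorem pressPath_append (G : BW V) (A B : List V) :
    pressPath G (A ++ B) = pressPath (pressPath G A) B := by
  induction A generalizing G with
  | nil => rfl
  | cons a A ih => exact ih (press G a)

theorem validPath_append {G : BW V} {A B : List V} :
    ValidPath G (A ++ B) ↔ ValidPath G A ∧ ValidPath (pressPath G A) B := by
  induction A generalizing G with
  | nil => simp [ValidPath, pressPath]
  | cons a A ih => simp [ValidPath, pressPath, ih, and_assoc]

def IsIsolatedBlackEdge (H : BW V) (u v : V) : Prop :=
  H.adj u v = true ∧ H.black u = true ∧ H.black v = true ∧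
    (∀ x, x ≠ u → H.adj v x = false) ∧ (∀ x, x ≠ v → H.adj u x = false)

theorem IsIsolatedBlackEdge.press_eq {H : BW V} {u v : V} (h : IsIsolatedBlackEdge H u v) :
    press H u = press H v := by
  obtain ⟨hadj, hbu, hbv, hv, hu⟩ := h
  have huv : u ≠ v := by rintro rfl; simp [H.irrefl] at hadj
  have hvu : H.adj v u = true := H.symm v u ▸ hadj
  have hru : ∀ x, x ≠ v → H.adj x u = false := fun x hx => (H.symm x u).trans (hu x hx)
  have hrv : ∀ x, x ≠ u → H.adj x v = false := fun x hx => (H.symm x v).trans (hv x hx)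
  ext a b
  · simp only [press_adj]
    grind
  · simp only [press_black]
    grind

theorem Successful.replace_press {G : BW V} {A B : List V} {u v : V}
    (hX : Successful G (A ++ u :: B)) (hv : (pressPath G A).black v = true)
    (he : press (pressPath G A) u = press (pressPath G A) v) :
    Successful G (A ++ v :: B) := by
  obtain ⟨hvalid, hwhite⟩ := hX
  rw [validPath_append] at hvalid
  rw [pressPath_append] at hwhite
  obtain ⟨hA, -, hB⟩ := hvalid
  refine ⟨validPath_append.mpr ⟨hA, hv, he ▸ hB⟩, ?_⟩
  simpa only [pressPath_append, pressPath, he] using hwhite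

/-- A disjoint union of paths along each of which the numbering `f` is monotone. -/
def IsMonotoneLinearForest (G : BW V) : Prop :=
  ∃ f : V → ℕ, ∀ u w x, G.adj u w = true → G.adj u x = true → w ≠ x →
    (f w < f u ∧ f u < f x) ∨ (f x < f u ∧ f u < f w)

theorem IsPathList.idxOf_adj {G : BW V} {l : List V} (hl : IsPathList G l) {u w : V}
    (h : G.adj u w = true) : l.idxOf u + 1 = l.idxOf w ∨ l.idxOf w + 1 = l.idxOf u := by
  have hidx : ∀ (i : ℕ) (u : V), l[i]? = some u → l.idxOf u = i := by
    intro i u hu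
    obtain ⟨hi, rfl⟩ := List.getElem?_eq_some_iff.mp hu
    exact hl.1.idxOf_getElem i hi
  obtain ⟨i, ⟨h1, h2⟩ | ⟨h1, h2⟩⟩ := (hl.2.2 u w).mp h
  · exact Or.inl (by rw [hidx _ _ h1, hidx _ _ h2])
  · exact Or.inr (by rw [hidx _ _ h1, hidx _ _ h2])

theorem IsPathList.isMonotoneLinearForest {G : BW V} {l : List V} (hl : IsPathList G l) :
    IsMonotoneLinearForest G := by
  refine ⟨l.idxOf, fun u w x huw hux hwx => ?_⟩
  dsimp only
  have hne : l.idxOf w ≠ l.idxOf x := fun h => hwx ((List.idxOf_inj (hl.2.1 w)).mp h)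
  have := hl.idxOf_adj huw
  have := hl.idxOf_adj hux
  omega

theorem IsMonotoneLinearForest.press {G : BW V} (hG : IsMonotoneLinearForest G) (p : V) :
    IsMonotoneLinearForest (press G p) := by
  obtain ⟨f, hf⟩ := hG
  refine ⟨f, fun u w x huw hux hwx => ?_⟩
  simp only [press_adj] at huw hux
  have hsymm := G.symm
  -- New edges join two neighbours of `p`, which lie on opposite sides of `p`.
  grind

theorem IsMonotoneLinearForest.adj_eq_false_of_adj_adj {V : Type} {G : BW V}
    (hG : IsMonotoneLinearForest G) {u w x : V} (huw : G.adj u w = true)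
    (hux : G.adj u x = true) : G.adj w x = false := by
  obtain ⟨f, hf⟩ := hG
  by_contra hwx
  rw [Bool.not_eq_false] at hwx
  have hne : ∀ {a b}, G.adj a b = true → a ≠ b := by
    rintro a _ h rfl
    simp [G.irrefl] at h
  have := hf u w x huw hux (hne hwx)
  have := hf w u x (G.symm w u ▸ huw) hwx (hne hux)
  omega

def IsActive (G : BW V) (v : V) : Prop :=
  G.black v = true ∨ ∃ x, G.adj v x = true

theorem IsActive.press {G : BW V} (hG : IsMonotoneLinearForest G) {u v : V}
    (hv : IsActive G v) (hvu : v ≠ u) (hu : G.black u = true)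
    (hiso : ¬IsIsolatedBlackEdge G u v) : IsActive (press G u) v := by
  have hsymm := G.symm
  have hirr := G.irrefl
  by_cases huv : G.adj u v = true
  · have hvu' : G.adj v u = true := hsymm v u ▸ huv
    by_cases hbv : G.black v = true
    · have : (∃ x, x ≠ u ∧ G.adj v x = true) ∨ ∃ x, x ≠ v ∧ G.adj u x = true := by
        simp only [IsIsolatedBlackEdge, huv, hu, hbv, true_and] at hiso
        grind
      right
      obtain ⟨x, hxu, hvx⟩ | ⟨x, hxv, hux⟩ := this
      · have := hG.adj_eq_false_of_adj_adj hvu' hvx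
        exact ⟨x, by grind [press_adj]⟩
      · have := hG.adj_eq_false_of_adj_adj huv hux
        exact ⟨x, by grind [press_adj]⟩
    · left
      grind [press_black]
  · rcases hv with hbv | ⟨x, hvx⟩
    · left
      grind [press_black]
    · right
      exact ⟨x, by grind [press_adj]⟩

theorem AllWhiteEmpty.not_isActive {V : Type} {G : BW V} (hG : AllWhiteEmpty G) (v : V) :
    ¬IsActive G v := by
  rintro (h | ⟨x, h⟩)
  · simp [hG.1 v] at h
  · simp [hG.2 v x] at h

theorem exists_isIsolatedBlackEdge_of_isActive {v : V} {X : List V} {G : BW V}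
    (hG : IsMonotoneLinearForest G) (hX : Successful G X) (hvX : v ∉ X) (hv : IsActive G v) :
    ∃ A u B, X = A ++ u :: B ∧ IsIsolatedBlackEdge (pressPath G A) u v := by
  induction X generalizing G with
  | nil => exact absurd hv (hX.2.not_isActive v)
  | cons u P ih =>
    obtain ⟨hvu, hvP⟩ := List.ne_and_not_mem_of_not_mem_cons hvX
    by_cases hiso : IsIsolatedBlackEdge G u v
    · exact ⟨[], u, P, rfl, hiso⟩
    obtain ⟨A, w, B, rfl, hA⟩ :=
      ih (hG.press u) ⟨hX.1.2, hX.2⟩ hvP (hv.press hG hvu hX.1.1 hiso)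
    exact ⟨u :: A, w, B, rfl, hA⟩

/-- In a linear graph, if a black vertex `v` is missed by a successful pressing
path `X`, then some successful path `X'` contains `v` and agrees with `X` in a
common subsequence of length `|X| - 1`. -/
theorem stmt7 {V : Type} [DecidableEq V] (G : BW V) (hG : IsLinear G)
    (v : V) (hv : G.black v = true)
    (X : List V) (hX : Successful G X) (hnot : v ∉ X) :
    ∃ X' : List V, Successful G X' ∧ v ∈ X' ∧ X'.length = X.length ∧
      ∃ R : List V, R.Sublist X ∧ R.Sublist X' ∧ R.length = X.length - 1 := by
  obtain ⟨l, hl⟩ := hG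
  obtain ⟨A, u, B, rfl, hiso⟩ :=
    exists_isIsolatedBlackEdge_of_isActive hl.isMonotoneLinearForest hX hnot (Or.inl hv)
  refine ⟨A ++ v :: B, hX.replace_press hiso.2.2.1 hiso.press_eq, by simp, by simp,
    A ++ B, ?_, ?_, by simp⟩
  · exact (List.sublist_cons_self u B).append_left A
  · exact (List.sublist_cons_self v B).append_left A
end
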